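/- If H is a spanning subgraph of a nonempty graph G with γ(H) = γ(G), then b(H) ≤ b(G). -/

import Mathlib

/-!
Take a minimum bondage set `B` of `G` (one exists since deleting every edge of `G` leaves an
edgeless graph, whose domination number `|V|` exceeds `γ(G)`). Its trace `B ∩ E(H)` is a bondage
set of `H`: deleting it from `H` gives `H - B`, a spanning subgraph of `G - B`, so
`γ(H - B) ≥ γ(G - B) > γ(G) = γ(H)`. Hence `b(H) ≤ |B ∩ E(H)| ≤ |B| = b(G)`.
-/

open SimpleGraph

variable {V : Type*}

/-- `S` is a dominating set of `G`: every vertex is in `S` or has a neighbor in `S`. -/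
def SimpleGraph.IsDomSet (G : SimpleGraph V) (S : Finset V) : Prop :=
  ∀ v : V, v ∈ S ∨ ∃ u ∈ S, G.Adj u v

/-- The domination number of a finite graph. -/
noncomputable def SimpleGraph.domNum [Fintype V] (G : SimpleGraph V) : ℕ :=
  sInf {n | ∃ S : Finset V, S.card = n ∧ G.IsDomSet S}

/-- The bondage number: the minimum size of a set of edges of `G` whose removal
increases the domination number. -/
noncomputable def SimpleGraph.bondageNum [Fintype V] (G : SimpleGraph V) : ℕ :=
  sInf {n | ∃ B : Finset (Sym2 V), B.card = n ∧ ↑B ⊆ G.edgeSet ∧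
    G.domNum < (G.deleteEdges ↑B).domNum}

namespace SimpleGraph

section DomSet

variable {G G' : SimpleGraph V}

theorem IsDomSet.mono (h : G ≤ G') {S : Finset V} (hS : G.IsDomSet S) : G'.IsDomSet S :=
  fun v => (hS v).imp_right fun ⟨u, hu, huv⟩ => ⟨u, hu, h huv⟩

theorem isDomSet_univ [Fintype V] (G : SimpleGraph V) : G.IsDomSet Finset.univ :=
  fun v => Or.inl (Finset.mem_univ v)

theorem isDomSet_bot_iff [Fintype V] {S : Finset V} :
    (⊥ : SimpleGraph V).IsDomSet S ↔ S = Finset.univ := by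
  simp [IsDomSet, Finset.eq_univ_iff_forall]

variable [Fintype V]

theorem domNum_le_card {S : Finset V} (hS : G.IsDomSet S) : G.domNum ≤ S.card :=
  Nat.sInf_le ⟨S, rfl, hS⟩

theorem exists_isDomSet_card_eq_domNum (G : SimpleGraph V) :
    ∃ S : Finset V, S.card = G.domNum ∧ G.IsDomSet S :=
  Nat.sInf_mem (s := {n | ∃ S : Finset V, S.card = n ∧ G.IsDomSet S})
    ⟨_, Finset.univ, rfl, G.isDomSet_univ⟩

theorem domNum_anti (h : G ≤ G') : G'.domNum ≤ G.domNum := by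
  obtain ⟨S, hcard, hS⟩ := G.exists_isDomSet_card_eq_domNum
  exact hcard ▸ domNum_le_card (hS.mono h)

theorem domNum_bot : (⊥ : SimpleGraph V).domNum = Fintype.card V := by
  obtain ⟨S, hcard, hS⟩ := (⊥ : SimpleGraph V).exists_isDomSet_card_eq_domNum
  rw [← hcard, isDomSet_bot_iff.mp hS, Finset.card_univ]

theorem domNum_lt_card_of_adj [DecidableEq V] {u v : V} (huv : G.Adj u v) :
    G.domNum < Fintype.card V := by
  have hS : G.IsDomSet (Finset.univ.erase v) := by
    intro w
    by_cases hw : w = v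
    · exact Or.inr ⟨u, Finset.mem_erase.2 ⟨huv.ne, Finset.mem_univ u⟩, hw ▸ huv⟩
    · exact Or.inl (Finset.mem_erase.2 ⟨hw, Finset.mem_univ w⟩)
  calc G.domNum ≤ (Finset.univ.erase v).card := domNum_le_card hS
    _ < Fintype.card V := Finset.card_erase_lt_of_mem (Finset.mem_univ v)

end DomSet

section Bondage

variable [Fintype V] {G H : SimpleGraph V}

def IsBondageSet (G : SimpleGraph V) (B : Finset (Sym2 V)) : Prop :=
  ↑B ⊆ G.edgeSet ∧ G.domNum < (G.deleteEdges ↑B).domNum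

theorem bondageNum_le_card {B : Finset (Sym2 V)} (hB : G.IsBondageSet B) :
    G.bondageNum ≤ B.card :=
  Nat.sInf_le ⟨B, rfl, hB⟩

theorem isBondageSet_edgeFinset [Fintype G.edgeSet] (hG : G.edgeSet.Nonempty) :
    G.IsBondageSet G.edgeFinset := by
  classical
  refine ⟨G.coe_edgeFinset.subset, ?_⟩
  obtain ⟨e, he⟩ := hG
  induction e using Sym2.ind with
  | h u v =>
    rw [coe_edgeFinset, deleteEdges_edgeSet, sdiff_self, domNum_bot]
    exact domNum_lt_card_of_adj he

theorem exists_isBondageSet_card_eq_bondageNum (hG : G.edgeSet.Nonempty) :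
    ∃ B : Finset (Sym2 V), B.card = G.bondageNum ∧ G.IsBondageSet B := by
  classical
  exact Nat.sInf_mem (s := {n | ∃ B : Finset (Sym2 V), B.card = n ∧ G.IsBondageSet B})
    ⟨_, G.edgeFinset, rfl, isBondageSet_edgeFinset hG⟩

theorem IsBondageSet.inter_edgeFinset [DecidableEq V] [DecidableRel H.Adj] (hle : H ≤ G)
    (hdom : H.domNum = G.domNum) {B : Finset (Sym2 V)} (hB : G.IsBondageSet B) :
    H.IsBondageSet (B ∩ H.edgeFinset) := by
  have hdel : H.deleteEdges ↑(B ∩ H.edgeFinset) = H.deleteEdges ↑B := by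
    rw [Finset.coe_inter, coe_edgeFinset, ← deleteEdges_eq_inter_edgeSet]
  refine ⟨by simp, ?_⟩
  calc H.domNum = G.domNum := hdom
    _ < (G.deleteEdges ↑B).domNum := hB.2
    _ ≤ (H.deleteEdges ↑(B ∩ H.edgeFinset)).domNum := hdel ▸ domNum_anti (deleteEdges_mono hle)

end Bondage

end SimpleGraph

theorem bondage_spanning_le_general [Fintype V] (G H : SimpleGraph V) (hle : H ≤ G)
    (hG : G.edgeSet.Nonempty)
    (hdom : H.domNum = G.domNum) :
    H.bondageNum ≤ G.bondageNum := by
  classical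
  obtain ⟨B, hcard, hB⟩ := exists_isBondageSet_card_eq_bondageNum hG
  calc H.bondageNum ≤ (B ∩ H.edgeFinset).card := bondageNum_le_card (hB.inter_edgeFinset hle hdom)
    _ ≤ B.card := Finset.card_le_card Finset.inter_subset_left
    _ = G.bondageNum := hcard

theorem bondage_spanning_le [Fintype V] (G H : SimpleGraph V) (hle : H ≤ G)
    (hG : G.edgeSet.Nonempty) (hH : H.edgeSet.Nonempty)
    (hdom : H.domNum = G.domNum) :
    H.bondageNum ≤ G.bondageNum :=
  bondage_spanning_le_general G H hle hG hdom
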